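/- arXiv:1801.10147 — 3 statements merged into one kernel-verified Lean document; each statement's English description precedes it below -/
import Mathlib

section
/- Let t ∈ 𝒮'(ℝ^N × ℝ^M) satisfy t(q,q') = O^dist(|q|^δ). Then there exist neighborhoods 𝒪₁ of 0 in ℝ^N and 𝒪₂ of 0 in ℝ^M such that: (i) for every g ∈ 𝒮(ℝ^N) with supp g ⊂ 𝒪₁, the tempered distribution on ℝ^M given by h ↦ ⟨t, g ⊗ h⟩ agrees on 𝒪₂ with a continuous function q' ↦ T_g(q'); (ii) for each such g the limit lim_{q'→0} T_g(q') exists, and the assignment g ↦ lim_{q'→0} T_g(q') defines a distribution t(·,0) on 𝒪₁ which satisfies t(q,0) = O^dist(|q|^δ). -/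
/-!
Near the origin `t = Σ_α ∂_q^α t_α` with finitely many continuous kernels `t_α`, so by Fubini
`⟨t, g ⊗ h⟩ = ∫ T_g(q') h(q') dq'` with
`T_g(q') = Σ_α (-1)^{|α|} ∫ t_α(q, q') ∂^α g(q) dq`.
The integrals are taken over a compact box around the origin on which the `t_α` are continuous,
hence bounded, so `T_g` is continuous by dominated convergence and its limit at `q' = 0` is
`T_g(0)`. That value is given by the kernels `t_α(·, 0)`, which inherit the bounds
`C |q|^{δ+|α|}`.
-/

open MeasureTheory SchwartzMap Filter Topology

noncomputable section

abbrev Euc (N : ℕ) : Type := EuclideanSpace ℝ (Fin N)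

/-- The basis direction in `ℝ^N × ℝ^M` corresponding to the `i`-th `q`-coordinate. -/
def qDir (N M : ℕ) (i : Fin N) : Euc N × Euc M := (EuclideanSpace.single i 1, 0)

/-- Iterated partial derivative `∂_q^α` (multi-index `α` over the `q`-variables) on Schwartz
functions on `ℝ^N × ℝ^M`. -/
def multiDerivQ {N M : ℕ} (α : Fin N → ℕ) :
    𝓢(Euc N × Euc M, ℂ) →L[ℂ] 𝓢(Euc N × Euc M, ℂ) :=
  (Finset.univ.toList (α := Fin N)).foldr
    (fun i A =>
      ((LineDeriv.lineDerivOpCLM ℂ 𝓢(Euc N × Euc M, ℂ) (qDir N M i) :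
          𝓢(Euc N × Euc M, ℂ) →L[ℂ] 𝓢(Euc N × Euc M, ℂ)) ^ (α i)).comp A)
    (ContinuousLinearMap.id ℂ _)

/-- `t(q,q') = O^dist(|q|^δ)` : the regularity condition of Duch, Def. 2.9.
There are a neighbourhood `O` of the origin in `ℝ^N × ℝ^M`, a constant `C > 0` and continuous
functions `tc α` on `O` (`α` a multi-index over the `q`-variables), all but finitely many zero,
vanishing when `δ + |α| < 0`, bounded by `C |q|^{δ+|α|}`, such that
`t = Σ_α ∂_q^α (tc α)` on test functions supported in `O`. -/
def OBig {N M : ℕ} (t : 𝓢(Euc N × Euc M, ℂ) →L[ℂ] ℂ) (δ : ℝ) : Prop :=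
  ∃ O : Set (Euc N × Euc M), IsOpen O ∧ (0 : Euc N × Euc M) ∈ O ∧
  ∃ C : ℝ, 0 < C ∧
  ∃ tc : (Fin N → ℕ) → Euc N × Euc M → ℂ,
    {α | tc α ≠ 0}.Finite ∧
    (∀ α, ContinuousOn (tc α) O) ∧
    (∀ α : Fin N → ℕ, δ + ((∑ i, α i : ℕ) : ℝ) < 0 → tc α = 0) ∧
    (∀ α : Fin N → ℕ, ∀ x ∈ O, ‖tc α x‖ ≤ C * ‖x.1‖ ^ (δ + ((∑ i, α i : ℕ) : ℝ))) ∧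
    (∀ g : 𝓢(Euc N × Euc M, ℂ), HasCompactSupport ⇑g → tsupport ⇑g ⊆ O →
      t g = ∑ᶠ α : Fin N → ℕ,
        (-1 : ℂ) ^ ((∑ i, α i : ℕ)) * ∫ x in O, tc α x * multiDerivQ α g x)

/-- Iterated partial derivative `∂^α` on Schwartz functions on `ℝ^N`. -/
def multiDerivN {N : ℕ} (α : Fin N → ℕ) : 𝓢(Euc N, ℂ) →L[ℂ] 𝓢(Euc N, ℂ) :=
  (Finset.univ.toList (α := Fin N)).foldr
    (fun i A =>
      ((LineDeriv.lineDerivOpCLM ℂ 𝓢(Euc N, ℂ) (EuclideanSpace.single i 1 : Euc N) :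
          𝓢(Euc N, ℂ) →L[ℂ] 𝓢(Euc N, ℂ)) ^ (α i)).comp A)
    (ContinuousLinearMap.id ℂ _)

/-- `v(q) = O^dist(|q|^δ)` for a tempered distribution `v` on `ℝ^N` (Def. 2.9, `M = 0`). -/
def OBigN {N : ℕ} (v : 𝓢(Euc N, ℂ) →L[ℂ] ℂ) (δ : ℝ) : Prop :=
  ∃ O : Set (Euc N), IsOpen O ∧ (0 : Euc N) ∈ O ∧
  ∃ C : ℝ, 0 < C ∧
  ∃ tc : (Fin N → ℕ) → Euc N → ℂ,
    {α | tc α ≠ 0}.Finite ∧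
    (∀ α, ContinuousOn (tc α) O) ∧
    (∀ α : Fin N → ℕ, δ + ((∑ i, α i : ℕ) : ℝ) < 0 → tc α = 0) ∧
    (∀ α : Fin N → ℕ, ∀ q ∈ O, ‖tc α q‖ ≤ C * ‖q‖ ^ (δ + ((∑ i, α i : ℕ) : ℝ))) ∧
    (∀ g : 𝓢(Euc N, ℂ), HasCompactSupport ⇑g → tsupport ⇑g ⊆ O →
      v g = ∑ᶠ α : Fin N → ℕ,
        (-1 : ℂ) ^ ((∑ i, α i : ℕ)) * ∫ q in O, tc α q * multiDerivN α g q)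

open LineDeriv

theorem foldr_pow_comp_rel {ι 𝕜 E F : Type*} [NontriviallyNormedField 𝕜]
    [AddCommGroup E] [Module 𝕜 E] [TopologicalSpace E] [AddCommGroup F] [Module 𝕜 F]
    [TopologicalSpace F] (R : E → F → Prop) {A : ι → E →L[𝕜] E} {B : ι → F →L[𝕜] F}
    (hAB : ∀ i x y, R x y → R (A i x) (B i y)) (α : ι → ℕ) (l : List ι) {x : E} {y : F}
    (hxy : R x y) :
    R (l.foldr (fun i T => (A i ^ α i).comp T) (ContinuousLinearMap.id 𝕜 E) x)
      (l.foldr (fun i T => (B i ^ α i).comp T) (ContinuousLinearMap.id 𝕜 F) y) := by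
  have hpow : ∀ i n x y, R x y → R ((A i ^ n) x) ((B i ^ n) y) := by
    intro i n
    induction n with
    | zero => exact fun _ _ h => h
    | succ n ih =>
      intro x y h
      simpa only [pow_succ, mul_apply_eq_comp] using ih _ _ (hAB i x y h)
  induction l with
  | nil => exact hxy
  | cons i l ih => exact hpow i (α i) _ _ ih

theorem SchwartzMap.lineDerivOp_fst_of_tensor {E F : Type*} [NormedAddCommGroup E]
    [NormedSpace ℝ E] [NormedAddCommGroup F] [NormedSpace ℝ F]
    {g : 𝓢(E, ℂ)} {h : 𝓢(F, ℂ)} {k : 𝓢(E × F, ℂ)} (hk : ∀ x, k x = g x.1 * h x.2) (m : E)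
    (x : E × F) : ∂_{((m, 0) : E × F)} k x = ∂_{m} g x.1 * h x.2 := by
  have hg : HasFDerivAt (fun x : E × F => g x.1)
      ((fderiv ℝ g x.1).comp (ContinuousLinearMap.fst ℝ E F)) x :=
    (g.hasFDerivAt x.1).comp x hasFDerivAt_fst
  have hh : HasFDerivAt (fun x : E × F => h x.2)
      ((fderiv ℝ h x.2).comp (ContinuousLinearMap.snd ℝ E F)) x :=
    (h.hasFDerivAt x.2).comp x hasFDerivAt_snd
  rw [lineDerivOp_apply_eq_fderiv, lineDerivOp_apply_eq_fderiv, funext hk,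
    show (fun x : E × F => g x.1 * h x.2) = (fun x => g x.1) * (fun x => h x.2) from rfl,
    (hg.mul hh).fderiv]
  simp [mul_comm]

theorem multiDerivQ_of_tensor {N M : ℕ} {g : 𝓢(Euc N, ℂ)} {h : 𝓢(Euc M, ℂ)}
    {k : 𝓢(Euc N × Euc M, ℂ)} (hk : ∀ x, k x = g x.1 * h x.2) (α : Fin N → ℕ)
    (x : Euc N × Euc M) : multiDerivQ α k x = multiDerivN α g x.1 * h x.2 :=
  foldr_pow_comp_rel
    (fun (k : 𝓢(Euc N × Euc M, ℂ)) (g : 𝓢(Euc N, ℂ)) => ∀ x, k x = g x.1 * h x.2)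
    (A := fun i => lineDerivOpCLM ℂ _ (qDir N M i))
    (B := fun i => lineDerivOpCLM ℂ _ (EuclideanSpace.single i 1 : Euc N))
    (fun _ _ _ hkg => SchwartzMap.lineDerivOp_fst_of_tensor hkg _) α _ hk x

theorem tsupport_multiDerivN_subset {N : ℕ} (α : Fin N → ℕ) (g : 𝓢(Euc N, ℂ)) :
    tsupport (multiDerivN α g) ⊆ tsupport g :=
  foldr_pow_comp_rel (fun (f _ : 𝓢(Euc N, ℂ)) => tsupport f ⊆ tsupport g)
    (A := fun i => lineDerivOpCLM ℂ _ (EuclideanSpace.single i 1 : Euc N))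
    (B := fun i => lineDerivOpCLM ℂ _ (EuclideanSpace.single i 1 : Euc N))
    (fun _ f _ hf => (SchwartzMap.tsupport_lineDerivOp_subset _ f).trans hf) α _
    (y := g) subset_rfl

theorem continuousOn_setIntegral_of_continuousOn_prod {X Y E : Type*} [TopologicalSpace X]
    [T2Space X] [MeasurableSpace X] [OpensMeasurableSpace X] [TopologicalSpace Y]
    [FirstCountableTopology Y] [NormedAddCommGroup E] [NormedSpace ℝ E] {μ : Measure X}
    [IsFiniteMeasureOnCompacts μ] {f : X × Y → E} {s : Set X} {u : Set Y} (hs : IsCompact s)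
    (hu : IsCompact u) (hf : ContinuousOn f (s ×ˢ u)) :
    ContinuousOn (fun y => ∫ x in s, f (x, y) ∂μ) u := by
  obtain ⟨B, hB⟩ := (hs.prod hu).exists_bound_of_continuousOn hf
  have hslice : ∀ y ∈ u, ContinuousOn (fun x => f (x, y)) s := fun y hy =>
    hf.comp (continuous_id.prodMk continuous_const).continuousOn fun x hx => ⟨hx, hy⟩
  refine continuousOn_of_dominated (bound := fun _ => B)
    (fun y hy => (hslice y hy).aestronglyMeasurable_of_isCompact hs hs.measurableSet)
    (fun y hy => ?_) (integrableOn_const hs.measure_ne_top) ?_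
  · filter_upwards [ae_restrict_mem hs.measurableSet] with x hx using hB _ ⟨hx, hy⟩
  · filter_upwards [ae_restrict_mem hs.measurableSet] with x hx
    exact hf.comp (continuous_const.prodMk continuous_id).continuousOn fun y hy => ⟨hx, hy⟩

def SchwartzMap.pairingCLM {E : Type*} [NormedAddCommGroup E] [NormedSpace ℝ E]
    [MeasurableSpace E] [OpensMeasurableSpace E] {μ : Measure E} (K : E → ℂ)
    (hK : Integrable K μ) : 𝓢(E, ℂ) →L[ℂ] ℂ :=
  have hKf : ∀ f : 𝓢(E, ℂ), Integrable (fun x => K x * f x) μ := fun f =>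
    hK.mul_bdd f.continuous.aestronglyMeasurable (ae_of_all _ (norm_le_seminorm ℂ f))
  mkCLMtoNormedSpace (fun f => ∫ x, K x * f x ∂μ)
    (fun f g => by simp only [add_apply, mul_add]; exact integral_add (hKf f) (hKf g))
    (fun a f => by simp only [smul_apply, smul_eq_mul, mul_left_comm, integral_const_mul]; rfl)
    ⟨{(0, 0)}, ∫ x, ‖K x‖ ∂μ, integral_nonneg fun _ => norm_nonneg _, fun f => by
      rw [Finset.sup_singleton, schwartzSeminormFamily_apply, ← integral_mul_const]
      refine norm_integral_le_of_norm_le (hK.norm.mul_const _) (ae_of_all _ fun x => ?_)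
      rw [norm_mul]
      exact mul_le_mul_of_nonneg_left (norm_le_seminorm ℂ f x) (norm_nonneg _)⟩

open Metric Set

theorem tsupport_mul_fst_snd_subset {X Y M₀ : Type*} [TopologicalSpace X] [TopologicalSpace Y]
    [MulZeroClass M₀] (g : X → M₀) (h : Y → M₀) :
    tsupport (fun x : X × Y => g x.1 * h x.2) ⊆ tsupport g ×ˢ tsupport h := by
  refine (closure_mono ?_).trans closure_prod_eq.subset
  exact fun x hx => ⟨left_ne_zero_of_mul hx, right_ne_zero_of_mul hx⟩

theorem exists_closedBall_prod_subset {E F : Type*} [PseudoMetricSpace E] [PseudoMetricSpace F]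
    {O : Set (E × F)} {x : E × F} (hO : O ∈ 𝓝 x) :
    ∃ r > 0, closedBall x.1 r ×ˢ closedBall x.2 r ⊆ O := by
  simpa only [closedBall_prod_same] using nhds_basis_closedBall.mem_iff.1 hO

theorem support_subset_toFinset_of_eq_zero {ι X R : Type*} [Zero R] {tc : ι → X → R}
    (hfin : {i | tc i ≠ 0}.Finite) {f : ι → R} (hf : ∀ i, tc i = 0 → f i = 0) :
    Function.support f ⊆ hfin.toFinset :=
  fun i hi => hfin.mem_toFinset.2 fun h0 => hi (hf i h0)

section Slice

variable {N M : ℕ} (S : Finset (Fin N → ℕ)) (tc : (Fin N → ℕ) → Euc N × Euc M → ℂ)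

-- When `t = Σ_α ∂_q^α (tc α)`, the integral of `sliceKernel S tc g (·, q')` is `⟨t, g ⊗ δ_{q'}⟩`.
def sliceKernel (g : 𝓢(Euc N, ℂ)) (x : Euc N × Euc M) : ℂ :=
  ∑ α ∈ S, (-1 : ℂ) ^ (∑ i, α i) * (tc α x * multiDerivN α g x.1)

def sliceAtZeroCLM (s : Set (Euc N)) (hint : ∀ α, IntegrableOn (fun q => tc α (q, 0)) s) :
    𝓢(Euc N, ℂ) →L[ℂ] ℂ :=
  ∑ α ∈ S, (-1 : ℂ) ^ (∑ i, α i) • (pairingCLM _ (hint α)).comp (multiDerivN α)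

theorem sliceAtZeroCLM_apply (s : Set (Euc N))
    (hint : ∀ α, IntegrableOn (fun q => tc α (q, 0)) s) (g : 𝓢(Euc N, ℂ)) :
    sliceAtZeroCLM S tc s hint g =
      ∑ α ∈ S, (-1 : ℂ) ^ (∑ i, α i) * ∫ q in s, tc α (q, 0) * multiDerivN α g q := by
  simp only [sliceAtZeroCLM, FunLike.coe_sum, Finset.sum_apply, FunLike.coe_smul,
    Pi.smul_apply, ContinuousLinearMap.coe_comp, Function.comp_apply, smul_eq_mul]
  rfl

variable {S tc}

theorem continuousOn_sliceKernel {W : Set (Euc N × Euc M)}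
    (hcont : ∀ α ∈ S, ContinuousOn (tc α) W) (g : 𝓢(Euc N, ℂ)) :
    ContinuousOn (sliceKernel S tc g) W :=
  continuousOn_finsetSum _ fun α hα => continuousOn_const.mul
    ((hcont α hα).mul ((multiDerivN α g).continuous.comp continuous_fst).continuousOn)

theorem sliceKernel_eq_zero_of_notMem_tsupport {g : 𝓢(Euc N, ℂ)} {x : Euc N × Euc M}
    (hx : x.1 ∉ tsupport g) : sliceKernel S tc g x = 0 :=
  Finset.sum_eq_zero fun α _ => by
    rw [image_eq_zero_of_notMem_tsupport fun h => hx (tsupport_multiDerivN_subset α g h),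
      mul_zero, mul_zero]

theorem setIntegral_sliceKernel {s s' : Set (Euc N)} (hs : IsCompact s) (hs's : s' ⊆ s)
    {g : 𝓢(Euc N, ℂ)} (hg : tsupport g ⊆ s') {q' : Euc M}
    (hcont : ∀ α ∈ S, ContinuousOn (fun q => tc α (q, q')) s) :
    ∫ q in s, sliceKernel S tc g (q, q') =
      ∑ α ∈ S, (-1 : ℂ) ^ (∑ i, α i) * ∫ q in s', tc α (q, q') * multiDerivN α g q := by
  have hint : ∀ α ∈ S, IntegrableOn (fun q => tc α (q, q') * multiDerivN α g q) s' :=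
    fun α hα => ((hcont α hα).mul (multiDerivN α g).continuous.continuousOn).integrableOn_compact
      hs |>.mono_set hs's
  rw [setIntegral_eq_of_subset_of_forall_sdiff_eq_zero hs.measurableSet hs's fun q hq =>
    sliceKernel_eq_zero_of_notMem_tsupport fun h => hq.2 (hg h)]
  simp only [sliceKernel]
  rw [integral_finsetSum _ fun α hα => (hint α hα).const_mul _]
  simp only [integral_const_mul]

theorem sum_setIntegral_multiDerivQ_of_tensor {O : Set (Euc N × Euc M)} (hO : MeasurableSet O)
    {s : Set (Euc N)} {u : Set (Euc M)} (hs : IsCompact s) (hu : IsCompact u) (hsu : s ×ˢ u ⊆ O)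
    (hcont : ∀ α ∈ S, ContinuousOn (tc α) (s ×ˢ u)) {g : 𝓢(Euc N, ℂ)} {h : 𝓢(Euc M, ℂ)}
    (hg : tsupport g ⊆ s) (hh : tsupport h ⊆ u) {k : 𝓢(Euc N × Euc M, ℂ)}
    (hk : ∀ x, k x = g x.1 * h x.2) :
    ∑ α ∈ S, (-1 : ℂ) ^ (∑ i, α i) * ∫ x in O, tc α x * multiDerivQ α k x =
      ∫ q' in u, (∫ q in s, sliceKernel S tc g (q, q')) * h q' := by
  set F : (Fin N → ℕ) → Euc N × Euc M → ℂ := fun α x => tc α x * (multiDerivN α g x.1 * h x.2)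
  have hF : ∀ α, ∫ x in O, tc α x * multiDerivQ α k x = ∫ x in s ×ˢ u, F α x := by
    intro α
    simp only [multiDerivQ_of_tensor hk]
    refine setIntegral_eq_of_subset_of_forall_sdiff_eq_zero hO hsu fun x hx => ?_
    rcases not_and_or.1 hx.2 with hx1 | hx2
    · simp [image_eq_zero_of_notMem_tsupport fun h =>
        hx1 (hg (tsupport_multiDerivN_subset α g h))]
    · simp [image_eq_zero_of_notMem_tsupport fun h' => hx2 (hh h')]
  have hFint : ∀ α ∈ S, IntegrableOn (F α) (s ×ˢ u) := fun α hα =>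
    ((hcont α hα).mul (((multiDerivN α g).continuous.comp continuous_fst).mul
      (h.continuous.comp continuous_snd)).continuousOn).integrableOn_compact (hs.prod hu)
  have hslice_int : IntegrableOn (fun x => sliceKernel S tc g x * h x.2) (s ×ˢ u) :=
    ((continuousOn_sliceKernel hcont g).mul
      (h.continuous.comp continuous_snd).continuousOn).integrableOn_compact (hs.prod hu)
  calc ∑ α ∈ S, (-1 : ℂ) ^ (∑ i, α i) * ∫ x in O, tc α x * multiDerivQ α k x
      = ∫ x in s ×ˢ u, ∑ α ∈ S, (-1 : ℂ) ^ (∑ i, α i) * F α x := by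
        rw [integral_finsetSum _ fun α hα => (hFint α hα).const_mul _]
        simp only [hF, integral_const_mul]
    _ = ∫ x in s ×ˢ u, sliceKernel S tc g x * h x.2 := by
        simp only [sliceKernel, F, Finset.sum_mul, mul_assoc]
    _ = ∫ q' in u, ∫ q in s, sliceKernel S tc g (q, q') * h q' := by
        rw [IntegrableOn, Measure.volume_eq_prod, ← Measure.prod_restrict] at hslice_int
        rw [Measure.volume_eq_prod, ← Measure.prod_restrict]
        exact integral_prod_symm _ hslice_int
    _ = ∫ q' in u, (∫ q in s, sliceKernel S tc g (q, q')) * h q' := by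
        simp only [integral_mul_const]

end Slice

theorem map_tensor_eq_setIntegral_sliceKernel {N M : ℕ} {t : 𝓢(Euc N × Euc M, ℂ) →L[ℂ] ℂ}
    {O : Set (Euc N × Euc M)} (hO : IsOpen O) {tc : (Fin N → ℕ) → Euc N × Euc M → ℂ}
    (hfin : {α | tc α ≠ 0}.Finite)
    (hrep : ∀ k : 𝓢(Euc N × Euc M, ℂ), HasCompactSupport k → tsupport k ⊆ O →
      t k = ∑ᶠ α : Fin N → ℕ, (-1 : ℂ) ^ (∑ i, α i) * ∫ x in O, tc α x * multiDerivQ α k x)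
    {s : Set (Euc N)} {u : Set (Euc M)} (hs : IsCompact s) (hu : IsCompact u) (hsu : s ×ˢ u ⊆ O)
    (hcont : ∀ α ∈ hfin.toFinset, ContinuousOn (tc α) (s ×ˢ u)) {g : 𝓢(Euc N, ℂ)}
    {h : 𝓢(Euc M, ℂ)} (hgc : HasCompactSupport g) (hhc : HasCompactSupport h)
    (hg : tsupport g ⊆ s) (hh : tsupport h ⊆ u) {k : 𝓢(Euc N × Euc M, ℂ)}
    (hk : ∀ x, k x = g x.1 * h x.2) :
    t k = ∫ q' in u, (∫ q in s, sliceKernel hfin.toFinset tc g (q, q')) * h q' := by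
  have hk_supp : tsupport k ⊆ tsupport g ×ˢ tsupport h :=
    funext hk ▸ tsupport_mul_fst_snd_subset g h
  rw [hrep k ((hgc.prod hhc).of_isClosed_subset (isClosed_tsupport _) hk_supp)
      (hk_supp.trans ((prod_mono hg hh).trans hsu)),
    finsum_eq_sum_of_support_subset _
      (support_subset_toFinset_of_eq_zero hfin fun α h0 => by simp [h0])]
  exact sum_setIntegral_multiDerivQ_of_tensor hO.measurableSet hs hu hsu hcont hg hh hk

theorem OBigN_of_eq_sum_setIntegral {N M : ℕ} {v : 𝓢(Euc N, ℂ) →L[ℂ] ℂ} {δ C : ℝ} (hC : 0 < C)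
    {O : Set (Euc N × Euc M)} {tc : (Fin N → ℕ) → Euc N × Euc M → ℂ}
    (hfin : {α | tc α ≠ 0}.Finite) (hcont : ∀ α, ContinuousOn (tc α) O)
    (hvan : ∀ α : Fin N → ℕ, δ + ((∑ i, α i : ℕ) : ℝ) < 0 → tc α = 0)
    (hbound : ∀ α : Fin N → ℕ, ∀ x ∈ O, ‖tc α x‖ ≤ C * ‖x.1‖ ^ (δ + ((∑ i, α i : ℕ) : ℝ)))
    {O₁ : Set (Euc N)} (hO₁ : IsOpen O₁) (h0 : 0 ∈ O₁) (hO₁O : ∀ q ∈ O₁, (q, 0) ∈ O)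
    (hv : ∀ g : 𝓢(Euc N, ℂ), tsupport g ⊆ O₁ → v g =
      ∑ α ∈ hfin.toFinset, (-1 : ℂ) ^ (∑ i, α i) * ∫ q in O₁, tc α (q, 0) * multiDerivN α g q) :
    OBigN v δ := by
  refine ⟨O₁, hO₁, h0, C, hC, fun α q => tc α (q, 0), hfin.subset fun α hα h0 => hα ?_,
    fun α => (hcont α).comp (continuous_id.prodMk continuous_const).continuousOn hO₁O,
    fun α hα => ?_, fun α q hq => by simpa using hbound α _ (hO₁O q hq), fun g _ hg => ?_⟩
  · exact funext fun q => by simp [h0]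
  · exact funext fun q => by simp [hvan α hα]
  · rw [hv g hg, finsum_eq_sum_of_support_subset _
      (support_subset_toFinset_of_eq_zero hfin fun α h0 => by simp [h0])]

/-- remark (3) after Def. 2.9 in Duch; restriction `t(·,0)`.
If `t(q,q') = O^dist(|q|^δ)` then there are neighbourhoods `O₁ ∋ 0`, `O₂ ∋ 0` such that for
every test function `g` supported in `O₁`, the distribution `h ↦ ⟨t, g ⊗ h⟩` agrees on `O₂`
with a continuous function `T g`, the limit of `T g` at `0` exists, and `g ↦ lim_{q'→0} T g`
defines a distribution `t(·,0)` on `O₁` satisfying `t(q,0) = O^dist(|q|^δ)`. -/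
theorem stmt7 (N M : ℕ) (t : 𝓢(Euc N × Euc M, ℂ) →L[ℂ] ℂ) (δ : ℝ) (hO : OBig t δ) :
    ∃ O₁ : Set (Euc N), IsOpen O₁ ∧ (0 : Euc N) ∈ O₁ ∧
    ∃ O₂ : Set (Euc M), IsOpen O₂ ∧ (0 : Euc M) ∈ O₂ ∧
    ∃ T : 𝓢(Euc N, ℂ) → Euc M → ℂ,
    ∃ v : 𝓢(Euc N, ℂ) →L[ℂ] ℂ,
      (∀ g : 𝓢(Euc N, ℂ), HasCompactSupport ⇑g → tsupport ⇑g ⊆ O₁ →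
        ContinuousOn (T g) O₂ ∧
        (∀ h : 𝓢(Euc M, ℂ), HasCompactSupport ⇑h → tsupport ⇑h ⊆ O₂ →
          ∀ k : 𝓢(Euc N × Euc M, ℂ), (∀ x : Euc N × Euc M, k x = g x.1 * h x.2) →
            t k = ∫ q' in O₂, T g q' * h q') ∧
        Tendsto (T g) (𝓝 (0 : Euc M)) (𝓝 (v g))) ∧
      OBigN v δ := by
  obtain ⟨O, hO, hO0, C, hC, tc, hfin, hcont, hvan, hbound, hrep⟩ := hO
  obtain ⟨r, hr, hrO⟩ := exists_closedBall_prod_subset (hO.mem_nhds hO0)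
  have hB₁ := isCompact_closedBall (0 : Euc N) r
  have hB₂ := isCompact_closedBall (0 : Euc M) r
  have h0B : ∀ q ∈ closedBall (0 : Euc N) r, (q, (0 : Euc M)) ∈ closedBall 0 r ×ˢ closedBall 0 r :=
    fun q hq => ⟨hq, mem_closedBall_self hr.le⟩
  have hcont0 : ∀ α, ContinuousOn (fun q => tc α (q, 0)) (closedBall (0 : Euc N) r) := fun α =>
    (hcont α).comp (continuous_id.prodMk continuous_const).continuousOn fun q hq => hrO (h0B q hq)
  have hint : ∀ α, IntegrableOn (fun q => tc α (q, 0)) (ball (0 : Euc N) r) := fun α =>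
    ((hcont0 α).integrableOn_compact hB₁).mono_set ball_subset_closedBall
  set T : 𝓢(Euc N, ℂ) → Euc M → ℂ :=
    fun g q' => ∫ q in closedBall 0 r, sliceKernel hfin.toFinset tc g (q, q')
  have hT : ∀ g, ContinuousOn (T g) (ball 0 r) := fun g =>
    (continuousOn_setIntegral_of_continuousOn_prod hB₁ hB₂ (continuousOn_sliceKernel
      (fun α _ => (hcont α).mono hrO) g)).mono ball_subset_closedBall
  refine ⟨ball 0 r, isOpen_ball, mem_ball_self hr, ball 0 r, isOpen_ball, mem_ball_self hr, T,
    sliceAtZeroCLM hfin.toFinset tc _ hint, fun g hgc hg => ⟨hT g, fun h hhc hh k hk => ?_, ?_⟩,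
    OBigN_of_eq_sum_setIntegral hC hfin hcont hvan hbound isOpen_ball (mem_ball_self hr)
      (fun q hq => hrO (h0B q (ball_subset_closedBall hq))) fun g _ => sliceAtZeroCLM_apply ..⟩
  · rw [map_tensor_eq_setIntegral_sliceKernel hO hfin hrep hB₁ hB₂ hrO
      (fun α _ => (hcont α).mono hrO) hgc hhc (hg.trans ball_subset_closedBall)
      (hh.trans ball_subset_closedBall) hk]
    exact setIntegral_eq_of_subset_of_forall_sdiff_eq_zero measurableSet_closedBall
      ball_subset_closedBall fun q' hq' => by
        rw [image_eq_zero_of_notMem_tsupport fun h' => hq'.2 (hh h'), mul_zero]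
  · rw [sliceAtZeroCLM_apply, ← setIntegral_sliceKernel hB₁ ball_subset_closedBall hg
      fun α _ => hcont0 α]
    exact (hT g).continuousAt (isOpen_ball.mem_nhds (mem_ball_self hr))

end
end

section
/- Fix n, m ∈ ℕ₊. There exists a constant C > 0 (depending only on n) such that whenever y₁,…,yₙ, x₁,…,xₘ ∈ ℝ⁴ satisfy: (i) there is a map u : {1,…,n} → {1,…,m} with x_{u(j)} − yⱼ ∈ V̄⁺ for every j (each yⱼ lies in the causal past of some xᵢ), and (ii) y⁰₁ + ⋯ + y⁰ₙ + (1/(3n))|(y₁,…,yₙ)| ≥ 0, then |(y₁,…,yₙ)| ≤ C|(x₁,…,xₘ)|. -/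
noncomputable section

/-- The closed forward light cone `V̄⁺ ⊂ ℝ⁴`: `v⁰ ≥ |v⃗|`. -/
def inForwardCone (v : Euc 4) : Prop :=
  Real.sqrt ((v 1) ^ 2 + (v 2) ^ 2 + (v 3) ^ 2) ≤ v 0

/-- Euclidean norm of the concatenation of `r` four-vectors. -/
def concatNorm {r : ℕ} (z : Fin r → Euc 4) : ℝ :=
  Real.sqrt (∑ j, ‖z j‖ ^ 2)

lemma abs_coord_le (v : Euc 4) (i : Fin 4) : |v i| ≤ ‖v‖ := by
  rw [EuclideanSpace.norm_eq, ← Real.sqrt_sq_eq_abs]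
  apply Real.sqrt_le_sqrt
  have := Finset.single_le_sum (f := fun k => ‖v k‖ ^ 2)
    (fun k _ => by positivity) (Finset.mem_univ i)
  simpa [Real.norm_eq_abs, sq_abs] using this

lemma norm_le_two_mul (v : Euc 4) (M : ℝ) (h : ∀ i, |v i| ≤ M) : ‖v‖ ≤ 2 * M := by
  have hM : 0 ≤ M := le_trans (abs_nonneg _) (h 0)
  rw [EuclideanSpace.norm_eq]
  have hsum : ∑ i, ‖v i‖ ^ 2 ≤ (2 * M) ^ 2 := by
    have h' : ∀ i : Fin 4, ‖v i‖ ^ 2 ≤ M ^ 2 := fun i => by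
      rw [Real.norm_eq_abs, ← sq_abs M]
      exact pow_le_pow_left₀ (abs_nonneg _) (le_trans (h i) (le_abs_self M)) 2
    have := Fin.sum_univ_four (fun i => ‖v i‖ ^ 2)
    nlinarith [h' 0, h' 1, h' 2, h' 3]
  calc Real.sqrt (∑ i, ‖v i‖ ^ 2) ≤ Real.sqrt ((2 * M) ^ 2) := Real.sqrt_le_sqrt hsum
    _ = 2 * M := Real.sqrt_sq (by positivity)

lemma norm_le_concat {r : ℕ} (z : Fin r → Euc 4) (i : Fin r) : ‖z i‖ ≤ concatNorm z := by
  rw [concatNorm, ← Real.sqrt_sq (norm_nonneg (z i))]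
  apply Real.sqrt_le_sqrt
  exact Finset.single_le_sum (f := fun k => ‖z k‖ ^ 2)
    (fun k _ => by positivity) (Finset.mem_univ i)

lemma sqrt_triple (a b c d : ℝ) (h : Real.sqrt (a ^ 2 + b ^ 2 + c ^ 2) ≤ d) :
    |a| ≤ d ∧ |b| ≤ d ∧ |c| ≤ d := by
  refine ⟨?_, ?_, ?_⟩ <;>
  · rw [← Real.sqrt_sq_eq_abs]
    refine le_trans (Real.sqrt_le_sqrt ?_) h
    nlinarith [sq_nonneg a, sq_nonneg b, sq_nonneg c]

/-- support inclusion used in Lemma 3.2 of Duch.  For every `n` there is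
`C > 0` such that: if each `yⱼ` lies in the causal past of some `x_{u(j)}` and
`y⁰₁ + ⋯ + y⁰ₙ + (1/(3n))|(y₁,…,yₙ)| ≥ 0`, then `|(y₁,…,yₙ)| ≤ C |(x₁,…,xₘ)|`. -/
theorem stmt14 (n : ℕ) (hn : 0 < n) :
    ∃ C : ℝ, 0 < C ∧
      ∀ (m : ℕ), 0 < m →
      ∀ (y : Fin n → Euc 4) (x : Fin m → Euc 4) (u : Fin n → Fin m),
        (∀ j : Fin n, inForwardCone (x (u j) - y j)) →
        0 ≤ (∑ j, y j 0) + (1 / (3 * (n : ℝ))) * concatNorm y →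
        concatNorm y ≤ C * concatNorm x := by
  have hn' : (0 : ℝ) < n := by exact_mod_cast hn
  refine ⟨6 * n * (n + 2), by positivity, ?_⟩
  intro m hm y x u hcone hsum
  set X := concatNorm x with hXdef
  set Y := concatNorm y with hYdef
  have hX : 0 ≤ X := Real.sqrt_nonneg _
  have hY : 0 ≤ Y := Real.sqrt_nonneg _
  -- each `‖x i‖ ≤ X`
  have hxX : ∀ i, ‖x i‖ ≤ X := fun i => norm_le_concat x i
  -- coordinate facts for the cone condition
  have hsub : ∀ j (i : Fin 4), (x (u j) - y j) i = x (u j) i - y j i := by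
    intro j i; simp
  have hw0 : ∀ j, 0 ≤ x (u j) 0 - y j 0 := by
    intro j
    have := le_trans (Real.sqrt_nonneg _) (hcone j)
    rwa [hsub j 0] at this
  -- upper bound on time components
  have hupper : ∀ j, y j 0 ≤ X := by
    intro j
    have h1 : x (u j) 0 ≤ X :=
      le_trans (le_abs_self _) (le_trans (abs_coord_le _ 0) (hxX _))
    linarith [hw0 j]
  -- lower bound on time components
  have hlowsum : -((1 / (3 * (n : ℝ))) * Y) ≤ ∑ j, y j 0 := by linarith
  have hlower : ∀ j, -((1 / (3 * (n : ℝ))) * Y) - n * X ≤ y j 0 := by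
    intro j
    have hsplit : ∑ k, y k 0 = y j 0 + ∑ k ∈ Finset.univ.erase j, y k 0 :=
      (Finset.add_sum_erase _ _ (Finset.mem_univ j)).symm
    have herase : ∑ k ∈ Finset.univ.erase j, y k 0 ≤ n * X := by
      calc ∑ k ∈ Finset.univ.erase j, y k 0 ≤ ∑ k ∈ Finset.univ.erase j, X :=
            Finset.sum_le_sum (fun k _ => hupper k)
        _ = (Finset.univ.erase j).card * X := by rw [Finset.sum_const, nsmul_eq_mul]
        _ ≤ n * X := by
            apply mul_le_mul_of_nonneg_right _ hX
            have : (Finset.univ.erase j).card ≤ n := by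
              simpa using Finset.card_le_univ (Finset.univ.erase j)
            exact_mod_cast this
    linarith [hlowsum, hsplit, herase]
  -- bound every coordinate of `y j` by `M`
  set M : ℝ := (n + 2) * X + (1 / (3 * (n : ℝ))) * Y with hMdef
  have hMY : 0 ≤ (1 / (3 * (n : ℝ))) * Y := by positivity
  have hcoord : ∀ j (i : Fin 4), |y j i| ≤ M := by
    intro j i
    have hc := hcone j
    rw [inForwardCone, hsub j 1, hsub j 2, hsub j 3, hsub j 0] at hc
    obtain ⟨h1, h2, h3⟩ := sqrt_triple _ _ _ _ hc
    have hx0 : |x (u j) 0| ≤ X := le_trans (abs_coord_le _ 0) (hxX _)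
    have hd : x (u j) 0 - y j 0 ≤ (n + 1) * X + (1 / (3 * (n : ℝ))) * Y := by
      have := hlower j
      have := le_trans (le_abs_self _) hx0
      linarith
    have hspace : ∀ i : Fin 4, |x (u j) i - y j i| ≤ x (u j) 0 - y j 0 → |y j i| ≤ M := by
      intro i hi
      have hxi : |x (u j) i| ≤ X := le_trans (abs_coord_le _ i) (hxX _)
      have : |y j i| ≤ |x (u j) i| + |x (u j) i - y j i| := by
        have := abs_sub_abs_le_abs_sub (x (u j) i) (y j i)
        have := abs_sub (x (u j) i) (y j i)
        calc |y j i| = |x (u j) i - (x (u j) i - y j i)| := by ring_nf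
          _ ≤ |x (u j) i| + |x (u j) i - y j i| := abs_sub _ _
      rw [hMdef]; linarith [le_trans hi hd]
    have h0 : |y j 0| ≤ M := by
      rw [abs_le, hMdef]
      constructor
      · have := hlower j; nlinarith
      · have := hupper j; nlinarith
    fin_cases i
    · simpa using h0
    · simpa using hspace 1 h1
    · simpa using hspace 2 h2
    · simpa using hspace 3 h3
  have hnorms : ∀ j, ‖y j‖ ≤ 2 * M := fun j => norm_le_two_mul _ _ (hcoord j)
  -- `Y ≤ ∑ ‖y j‖`
  have hYsum : Y ≤ ∑ j, ‖y j‖ := by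
    rw [hYdef, concatNorm, ← Real.sqrt_sq (Finset.sum_nonneg (fun j _ => norm_nonneg (y j)))]
    exact Real.sqrt_le_sqrt
      (Finset.sum_sq_le_sq_sum_of_nonneg (fun j _ => norm_nonneg (y j)))
  have hfinal : Y ≤ n * (2 * M) := by
    calc Y ≤ ∑ j, ‖y j‖ := hYsum
      _ ≤ ∑ _j : Fin n, 2 * M := Finset.sum_le_sum (fun j _ => hnorms j)
      _ = n * (2 * M) := by rw [Finset.sum_const, nsmul_eq_mul, Finset.card_univ,
            Fintype.card_fin]
  have hkey : (n : ℝ) * (1 / (3 * (n : ℝ))) = 1 / 3 := by field_simp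
  rw [hMdef] at hfinal
  nlinarith [hfinal, hkey, hX, hY, hn']
end
end

section
/- For a formal power series a ∈ ℂ⟦X⟧ the following are equivalent: (i) there exists b ∈ ℂ⟦X⟧ with a = b̄ · b, where b̄ denotes the coefficientwise complex conjugate of b; (ii) all coefficients of a are real, and either a = 0 or, with n₀ the least index such that the coefficient a_{n₀} is nonzero, n₀ is even and a_{n₀} > 0. -/
/-!
If `b = X ^ k * c` with `c 0 ≠ 0`, then `b̄ b = X ^ (2k) * c̄ c` has real coefficients and leading
coefficient `|c 0|² > 0`. Conversely, a real series `X ^ (2k) * d` with `d 0 > 0` is the square of a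
real series `X ^ k * e`, because `ℝ⟦X⟧` is `X`-adically complete, hence Henselian, so the simple
root `√(d 0)` of `T² - d 0` lifts to a root of `T² - d`; for a real `b` one has `b̄ b = b²`.
-/

open PowerSeries

namespace PowerSeries

theorem coeff_X_pow_mul_self {R : Type*} [Semiring R] (n : ℕ) (ψ : R⟦X⟧) :
    coeff n (X ^ n * ψ) = constantCoeff ψ := by
  simp [coeff_X_pow_mul']

theorem coeff_X_pow_mul_of_lt {R : Type*} [Semiring R] {m n : ℕ} (ψ : R⟦X⟧) (h : m < n) :
    coeff m (X ^ n * ψ) = 0 :=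
  X_pow_dvd_iff.mp (dvd_mul_right _ _) m h

theorem exists_eq_X_pow_mul {R : Type*} [Semiring R] {φ : R⟦X⟧} {n : ℕ}
    (h : ∀ m < n, coeff m φ = 0) : ∃ ψ, φ = X ^ n * ψ ∧ constantCoeff ψ = coeff n φ := by
  obtain ⟨ψ, rfl⟩ := X_pow_dvd_iff.mpr h
  exact ⟨ψ, rfl, (coeff_X_pow_mul_self n ψ).symm⟩

theorem exists_sq_eq_of_isUnit_two_mul {R : Type*} [CommRing R] {d : R⟦X⟧} {c : R}
    (hc : IsUnit (2 * c)) (hd : constantCoeff d = c ^ 2) : ∃ e : R⟦X⟧, e ^ 2 = d := by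
  set I : Ideal R⟦X⟧ := Ideal.span {X}
  have hroot : (C c) ^ 2 - d ∈ I := by
    simp [I, Ideal.mem_span_singleton, X_dvd_iff, hd]
  have hsimple : IsUnit (Ideal.Quotient.mk I (C (2 * c))) := (hc.map C).map _
  obtain ⟨e, he, -⟩ := HenselianRing.is_henselian (Polynomial.X ^ 2 - Polynomial.C d)
    (Polynomial.monic_X_pow_sub_C d two_ne_zero) (C c) (by simpa using hroot)
    (by simpa [one_add_one_eq_two, map_ofNat C 2] using hsimple)
  exact ⟨e, by simpa [sub_eq_zero] using he⟩

theorem exists_sq_eq_of_constantCoeff_pos {d : ℝ⟦X⟧} (hd : 0 < constantCoeff d) :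
    ∃ e : ℝ⟦X⟧, e ^ 2 = d :=
  exists_sq_eq_of_isUnit_two_mul (c := √(constantCoeff d))
    (IsUnit.mk0 _ (by positivity)) (Real.sq_sqrt hd.le).symm

theorem exists_sq_eq_of_coeff_two_mul_pos {f : ℝ⟦X⟧} {k : ℕ}
    (h : ∀ m < 2 * k, coeff m f = 0) (hpos : 0 < coeff (2 * k) f) : ∃ g : ℝ⟦X⟧, g ^ 2 = f := by
  obtain ⟨d, rfl, hd⟩ := exists_eq_X_pow_mul h
  obtain ⟨e, rfl⟩ := exists_sq_eq_of_constantCoeff_pos (hd ▸ hpos)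
  exact ⟨X ^ k * e, by ring⟩

theorem map_conj_map_conj (b : ℂ⟦X⟧) :
    map (starRingEnd ℂ) (map (starRingEnd ℂ) b) = b := by
  ext n
  simp [coeff_map]

theorem map_conj_map_ofReal (f : ℝ⟦X⟧) :
    map (starRingEnd ℂ) (map Complex.ofRealHom f) = map Complex.ofRealHom f := by
  ext n
  simp [coeff_map]

theorem map_ofReal_mk_re {a : ℂ⟦X⟧} (h : ∀ n, (coeff n a).im = 0) :
    map Complex.ofRealHom (mk fun n ↦ (coeff n a).re) = a := by
  ext n
  exact Complex.ext (by simp [coeff_map]) (by simp [coeff_map, h n])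

theorem im_coeff_map_conj_mul_self (b : ℂ⟦X⟧) (n : ℕ) :
    (coeff n (map (starRingEnd ℂ) b * b)).im = 0 := by
  rw [← Complex.conj_eq_iff_im, ← coeff_map, map_mul, map_conj_map_conj, mul_comm]

theorem exists_map_conj_mul_self_eq_X_pow_mul {b : ℂ⟦X⟧} (hb : b ≠ 0) :
    ∃ (k : ℕ) (ψ : ℂ⟦X⟧),
      map (starRingEnd ℂ) b * b = X ^ (2 * k) * ψ ∧ 0 < (constantCoeff ψ).re := by
  set c := divXPowOrder b
  have hc : constantCoeff c ≠ 0 := constantCoeff_divXPowOrder_eq_zero_iff.not.mpr hb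
  refine ⟨b.order.toNat, map (starRingEnd ℂ) c * c, ?_, ?_⟩
  · conv_lhs => rw [← X_pow_order_mul_divXPowOrder (f := b)]
    rw [map_mul, map_pow, map_X]
    ring
  · rw [map_mul, ← coeff_zero_eq_constantCoeff_apply, coeff_map, coeff_zero_eq_constantCoeff_apply,
      ← Complex.normSq_eq_conj_mul_self, Complex.ofReal_re]
    exact Complex.normSq_pos.mpr hc

end PowerSeries

/-- nonnegativity of formal power series, Duch Def. 5.3.
For `a ∈ ℂ⟦X⟧` the following are equivalent:
(i) `a = b̄ ⬝ b` for some `b ∈ ℂ⟦X⟧` (coefficientwise conjugate);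
(ii) all coefficients of `a` are real and either `a = 0` or the first nonzero
coefficient has even index and is positive. -/
theorem stmt17 (a : PowerSeries ℂ) :
    (∃ b : PowerSeries ℂ, a = (PowerSeries.map (starRingEnd ℂ) b) * b) ↔
      ((∀ n : ℕ, (PowerSeries.coeff n a).im = 0) ∧
        (a = 0 ∨ ∃ n₀ : ℕ,
          PowerSeries.coeff n₀ a ≠ 0 ∧
          (∀ m : ℕ, m < n₀ → PowerSeries.coeff m a = 0) ∧
          Even n₀ ∧ 0 < (PowerSeries.coeff n₀ a).re)) := by
  constructor
  · rintro ⟨b, rfl⟩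
    refine ⟨im_coeff_map_conj_mul_self b, ?_⟩
    rcases eq_or_ne b 0 with rfl | hb
    · simp
    obtain ⟨k, ψ, hψ, hpos⟩ := exists_map_conj_mul_self_eq_X_pow_mul hb
    have hlead := coeff_X_pow_mul_self (2 * k) ψ
    rw [hψ]
    refine Or.inr ⟨2 * k, fun h ↦ hpos.ne' (by simp [← hlead, h]),
      fun m hm ↦ coeff_X_pow_mul_of_lt ψ hm, even_two_mul k, hlead ▸ hpos⟩
  · rintro ⟨him, rfl | ⟨n₀, -, hlow, ⟨k, rfl⟩, hpos⟩⟩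
    · exact ⟨0, by simp⟩
    set f : ℝ⟦X⟧ := mk fun n ↦ (coeff n a).re
    have hf : map Complex.ofRealHom f = a := map_ofReal_mk_re him
    obtain ⟨g, hg⟩ := exists_sq_eq_of_coeff_two_mul_pos (f := f) (k := k)
      (fun m hm ↦ by simp [f, hlow m (by omega)]) (by simpa [f, two_mul] using hpos)
    refine ⟨map Complex.ofRealHom g, ?_⟩
    rw [map_conj_map_ofReal, ← sq, ← map_pow, hg, hf]
end
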